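/- Assume C is 𝒜-approximating. An object V of H_𝒜 satisfies π_C V ≅ 0 if and only if V is isomorphic in H_𝒜 to a complex of the form [X → C ⊕ Y → Z] (concentrated in degrees −2, −1, 0) in which the component C → Z of the differential is a C-cover and X = Ker(C ⊕ Y → Z). Equivalently, the kernel of π_C : H_𝒜 → H_C consists of the objects Coker(τ≥0_𝒜 π_C V → V) for V ∈ H_𝒜. -/

import Mathlib

open CategoryTheory Limits

universe v u

variable {A : Type u} [Category.{v} A] [Abelian A]

/-- An object of `K(A)` is bounded above (i.e. lies in `K^-(A)`). -/
def BddAbv (X : HomotopyCategory A (ComplexShape.up ℤ)) : Prop :=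
  ∃ N : ℤ, ∀ i > N, IsZero (X.as.X i)

/-- All terms of the complex lie in the subcategory `𝒞`. -/
def TermsIn (𝒞 : Set A) (X : HomotopyCategory A (ComplexShape.up ℤ)) : Prop :=
  ∀ i : ℤ, X.as.X i ∈ 𝒞

/-- Objects of `T_C = K^-(C)` inside `K(A)`. -/
def InTC (𝒞 : Set A) (X : HomotopyCategory A (ComplexShape.up ℤ)) : Prop :=
  BddAbv X ∧ TermsIn 𝒞 X

/-- Objects of `T≤0_A`. -/
def InTleA (X : HomotopyCategory A (ComplexShape.up ℤ)) : Prop :=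
  BddAbv X ∧ ∀ i > 0, IsZero (X.as.X i)

/-- Objects of `T≤0_C`. -/
def InTleC (𝒞 : Set A) (X : HomotopyCategory A (ComplexShape.up ℤ)) : Prop :=
  InTleA X ∧ TermsIn 𝒞 X

/-- Quasi-isomorphisms in the homotopy category. -/
def IsQIso {X Y : HomotopyCategory A (ComplexShape.up ℤ)} (f : X ⟶ Y) : Prop :=
  ∀ i : ℤ, IsIso ((HomotopyCategory.homologyFunctor A (ComplexShape.up ℤ) i).map f)

/-- `f : Xc ⟶ X` is a `C`-approximation. -/
def IsCApprox (𝒞 : Set A) {Xc X : HomotopyCategory A (ComplexShape.up ℤ)} (f : Xc ⟶ X) : Prop :=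
  InTC 𝒞 Xc ∧ IsQIso f ∧
    ∀ V, InTC 𝒞 V → Function.Bijective (fun g : V ⟶ Xc => g ≫ f)

/-- `C` is `A`-approximating. -/
def CApproximating (𝒞 : Set A) : Prop :=
  ∀ X, BddAbv X → ∃ (Xc : HomotopyCategory A (ComplexShape.up ℤ)) (f : Xc ⟶ X), IsCApprox 𝒞 f

/-- Objects of `T≥0_A = (T≤0_A⟦1⟧)^⊥` in `T_A`. -/
def InTgeA (X : HomotopyCategory A (ComplexShape.up ℤ)) : Prop :=
  BddAbv X ∧ ∀ Y, InTleA Y → ∀ f : Y⟦(1:ℤ)⟧ ⟶ X, f = 0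

/-- Objects of `T≥0_C = (T≤0_C⟦1⟧)^⊥` in `T_C`. -/
def InTgeC (𝒞 : Set A) (X : HomotopyCategory A (ComplexShape.up ℤ)) : Prop :=
  InTC 𝒞 X ∧ ∀ Y, InTleC 𝒞 Y → ∀ f : Y⟦(1:ℤ)⟧ ⟶ X, f = 0

/-- The heart `H_A` of the t-structure on `T_A`. -/
def InHA (X : HomotopyCategory A (ComplexShape.up ℤ)) : Prop :=
  InTleA X ∧ InTgeA X

/-- The heart `H_C` of the t-structure on `T_C`. -/
def InHC (𝒞 : Set A) (X : HomotopyCategory A (ComplexShape.up ℤ)) : Prop :=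
  InTleC 𝒞 X ∧ InTgeC 𝒞 X

/-- `C`-covers. -/
def IsCCover (𝒞 : Set A) {C₀ M : A} (p : C₀ ⟶ M) : Prop :=
  C₀ ∈ 𝒞 ∧ Epi p ∧ ∀ V ∈ 𝒞, ∀ g : V ⟶ M, ∃ h : V ⟶ C₀, h ≫ p = g

/-- A `C`-resolution `⋯ → C¹ → C⁰ → M → 0` of `M`. -/
structure CResolution (𝒞 : Set A) (M : A) where
  obj : ℕ → A
  mem : ∀ n, obj n ∈ 𝒞
  d : ∀ n, obj (n + 1) ⟶ obj n
  ε : obj 0 ⟶ M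
  epi : Epi ε
  w0 : d 0 ≫ ε = 0
  w : ∀ n, d (n + 1) ≫ d n = 0
  exact0 : (ShortComplex.mk (d 0) ε w0).Exact
  exact : ∀ n, (ShortComplex.mk (d (n + 1)) (d n) (w n)).Exact
  homSurj : ∀ V ∈ 𝒞, ∀ g : V ⟶ M, ∃ h : V ⟶ obj 0, h ≫ ε = g
  homExact0 : ∀ V ∈ 𝒞, ∀ g : V ⟶ obj 0, g ≫ ε = 0 → ∃ h : V ⟶ obj 1, h ≫ d 0 = g
  homExact : ∀ n, ∀ V ∈ 𝒞, ∀ g : V ⟶ obj (n + 1),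
    g ≫ d n = 0 → ∃ h : V ⟶ obj (n + 2), h ≫ d (n + 1) = g

/-- `𝒜` has `C`-dimension at most `n`. -/
def CDimLE (𝒞 : Set A) (n : ℕ) : Prop :=
  ∀ M : A, ∃ r : CResolution 𝒞 M, ∀ m > n, IsZero (r.obj m)

/-- `𝒞` is a Karoubi-closed full additive subcategory. -/
structure IsAddKaroubi (𝒞 : Set A) : Prop where
  zero : ∀ Z : A, IsZero Z → Z ∈ 𝒞
  iso : ∀ {X Y : A}, (X ≅ Y) → X ∈ 𝒞 → Y ∈ 𝒞
  biprod : ∀ {X Y : A}, X ∈ 𝒞 → Y ∈ 𝒞 → (X ⊞ Y) ∈ 𝒞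
  summand : ∀ {X Y : A}, X ∈ 𝒞 → ∀ (i : Y ⟶ X) (p : X ⟶ Y), i ≫ p = 𝟙 Y → Y ∈ 𝒞

/-- The object `P_M ∈ H_C` : the complex `M` concentrated in degree `0`. -/
noncomputable def PObj (M : A) : HomotopyCategory A (ComplexShape.up ℤ) :=
  (HomotopyCategory.quotient A (ComplexShape.up ℤ)).obj
    ((HomologicalComplex.single A (ComplexShape.up ℤ) 0).obj M)

/-- The morphism `P_f : P_M ⟶ P_N` induced by `f : M ⟶ N`. -/
noncomputable def PMap {M N : A} (f : M ⟶ N) : PObj M ⟶ PObj N :=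
  (HomotopyCategory.quotient A (ComplexShape.up ℤ)).map
    ((HomologicalComplex.single A (ComplexShape.up ℤ) 0).map f)

section Relative

variable (P : HomotopyCategory A (ComplexShape.up ℤ) → Prop)

/-- Epimorphism relative to the full subcategory `P`. -/
def EpiIn {X Y : HomotopyCategory A (ComplexShape.up ℤ)} (f : X ⟶ Y) : Prop :=
  ∀ Z, P Z → ∀ u v : Y ⟶ Z, f ≫ u = f ≫ v → u = v

/-- Monomorphism relative to the full subcategory `P`. -/
def MonoIn {X Y : HomotopyCategory A (ComplexShape.up ℤ)} (f : X ⟶ Y) : Prop :=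
  ∀ Z, P Z → ∀ u v : Z ⟶ X, u ≫ f = v ≫ f → u = v

/-- Simple object of the full (abelian) subcategory `P`: it is nonzero and every nonzero
morphism into it from an object of `P` is an epimorphism in `P`. -/
def SimpleIn (V : HomotopyCategory A (ComplexShape.up ℤ)) : Prop :=
  P V ∧ ¬ IsZero V ∧ ∀ U, P U → ∀ f : U ⟶ V, f ≠ 0 → EpiIn P f

/-- Projective object of the full subcategory `P`. -/
def ProjectiveIn (Q : HomotopyCategory A (ComplexShape.up ℤ)) : Prop :=
  P Q ∧ ∀ X Y, P X → P Y → ∀ e : X ⟶ Y, EpiIn P e → ∀ g : Q ⟶ Y, ∃ h : Q ⟶ X, h ≫ e = g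

/-- Injective object of the full subcategory `P`. -/
def InjectiveIn (J : HomotopyCategory A (ComplexShape.up ℤ)) : Prop :=
  P J ∧ ∀ X Y, P X → P Y → ∀ m : X ⟶ Y, MonoIn P m → ∀ g : X ⟶ J, ∃ h : Y ⟶ J, m ≫ h = g

/-- `f` is a kernel of `g` relative to the full subcategory `P`. -/
def IsKernelIn {X Y Z : HomotopyCategory A (ComplexShape.up ℤ)} (f : X ⟶ Y) (g : Y ⟶ Z) : Prop :=
  P X ∧ f ≫ g = 0 ∧ ∀ W, P W → ∀ h : W ⟶ Y, h ≫ g = 0 → ∃! l : W ⟶ X, l ≫ f = h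

/-- The sequence `X ⟶ Y ⟶ Z` is exact at `Y` relative to the abelian full subcategory `P`:
the induced map to any kernel of `g` in `P` is an epimorphism in `P`. -/
def ExactIn {X Y Z : HomotopyCategory A (ComplexShape.up ℤ)} (f : X ⟶ Y) (g : Y ⟶ Z) : Prop :=
  f ≫ g = 0 ∧ ∀ (K : HomotopyCategory A (ComplexShape.up ℤ)) (k : K ⟶ Y),
    IsKernelIn P k g → ∀ l : X ⟶ K, l ≫ k = f → EpiIn P l

/-- Short exact sequence `0 ⟶ X ⟶ Y ⟶ Z ⟶ 0` relative to `P`. -/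
def ShortExactIn {X Y Z : HomotopyCategory A (ComplexShape.up ℤ)} (f : X ⟶ Y) (g : Y ⟶ Z) : Prop :=
  MonoIn P f ∧ EpiIn P g ∧ IsKernelIn P f g

end Relative

/-!
If `π_C V = 0`, every map into `V` from a complex of `C` is null-homotopic. Applied to a
`C`-cover `p : C ⟶ V⁰` placed in degree `0`, this lifts `p` to `s₀ : C ⟶ V⁻¹`; and since
`V ∈ T≥0`, the inclusion of `ker d⁻¹` placed in degree `-1` lifts to `s₁ : ker d⁻¹ ⟶ V⁻²`.
With `s₀` and `s₁`, `V` is homotopy equivalent to `W = [ker (p, d) ⟶ C ⊞ V⁻¹ ⟶ V⁰]`: on `W`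
the defect of the composite is null-homotopic because `W⁻² ⟶ W⁻¹` is a kernel, and on `V` it
vanishes in degrees `≥ 0`, so it factors through the brutal truncation `σ≤-1 V ∈ T≤0⟦1⟧`.
Conversely, a map from a complex with degree-`0` term in `C` to such a `W` is null-homotopic:
lift its degree-`0` part through the cover and the rest through the kernel. So the
`C`-approximation `Vc ⟶ V ≅ W` vanishes, and then so does `Vc`.
-/

open ZeroObject

namespace CochainComplex

section ThreeTerm

variable {X₂ X₁ X₀ : A} (d₂ : X₂ ⟶ X₁) (d₁ : X₁ ⟶ X₀) (w : d₂ ≫ d₁ = 0)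

noncomputable def threeTermX (X₂ X₁ X₀ : A) : ℤ → A
  | .ofNat 0 => X₀
  | .negSucc 0 => X₁
  | .negSucc 1 => X₂
  | _ => 0

noncomputable def threeTermD : (i j : ℤ) → threeTermX X₂ X₁ X₀ i ⟶ threeTermX X₂ X₁ X₀ j
  | .negSucc 1, .negSucc 0 => d₂
  | .negSucc 0, .ofNat 0 => d₁
  | _, _ => 0

/-- `X₂ ⟶ X₁ ⟶ X₀` in degrees `-2, -1, 0`, where its terms and differentials are
`X₂, X₁, X₀, d₂, d₁` by `rfl`. -/
noncomputable def threeTerm : CochainComplex A ℤ where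
  X := threeTermX X₂ X₁ X₀
  d := threeTermD d₂ d₁
  shape i j hij := by
    rcases i with (_ | _) | (_ | _ | _) <;> rcases j with (_ | _) | (_ | _ | _) <;>
      first | rfl | exact absurd rfl hij
  d_comp_d' := by
    rintro ((_ | i) | (_ | _ | i)) _ _ rfl rfl
    · exact zero_comp
    · exact zero_comp
    · exact comp_zero
    · exact w
    · exact zero_comp

lemma isZero_threeTerm_X {i : ℤ} (hi : i < -2 ∨ 0 < i) : IsZero ((threeTerm d₂ d₁ w).X i) := by
  obtain ⟨k, rfl | rfl⟩ : ∃ k : ℕ, i = -((k + 3 : ℕ) : ℤ) ∨ i = ((k + 1 : ℕ) : ℤ) := by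
    rcases hi with hi | hi
    · exact ⟨(-i - 3).toNat, Or.inl (by omega)⟩
    · exact ⟨(i - 1).toNat, Or.inr (by omega)⟩
  all_goals exact isZero_zero A

variable {d₂ d₁ w} {K : CochainComplex A ℤ}

noncomputable def threeTermLift (f₂ : K.X (-2) ⟶ X₂) (f₁ : K.X (-1) ⟶ X₁) (f₀ : K.X 0 ⟶ X₀)
    (h₃ : K.d (-3) (-2) ≫ f₂ = 0) (h₂ : f₂ ≫ d₂ = K.d (-2) (-1) ≫ f₁)
    (h₁ : f₁ ≫ d₁ = K.d (-1) 0 ≫ f₀) : K ⟶ threeTerm d₂ d₁ w where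
  f
    | .ofNat 0 => f₀
    | .negSucc 0 => f₁
    | .negSucc 1 => f₂
    | _ => 0
  comm' := by
    rintro ((_ | i) | (_ | _ | _ | i)) _ rfl
    · exact comp_zero.trans comp_zero.symm
    · exact zero_comp.trans comp_zero.symm
    · exact h₁
    · exact h₂
    · exact zero_comp.trans h₃.symm
    · exact zero_comp.trans comp_zero.symm

noncomputable def threeTermDesc (g₂ : X₂ ⟶ K.X (-2)) (g₁ : X₁ ⟶ K.X (-1)) (g₀ : X₀ ⟶ K.X 0)
    (h₂ : g₂ ≫ K.d (-2) (-1) = d₂ ≫ g₁) (h₁ : g₁ ≫ K.d (-1) 0 = d₁ ≫ g₀)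
    (h₀ : g₀ ≫ K.d 0 1 = 0) : threeTerm d₂ d₁ w ⟶ K where
  f
    | .ofNat 0 => g₀
    | .negSucc 0 => g₁
    | .negSucc 1 => g₂
    | _ => 0
  comm' := by
    rintro ((_ | i) | (_ | _ | _ | i)) _ rfl
    · exact h₀.trans comp_zero.symm
    · exact zero_comp.trans comp_zero.symm
    · exact h₁
    · exact h₂
    · exact zero_comp.trans zero_comp.symm
    · exact zero_comp.trans comp_zero.symm

end ThreeTerm

section BrutalTrunc

variable (K : CochainComplex A ℤ) (n : ℤ)

noncomputable def brutalTruncLE : CochainComplex A ℤ where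
  X i := if i ≤ n then K.X i else 0
  d i j := if h : i ≤ n ∧ j ≤ n then
    eqToHom (if_pos h.1) ≫ K.d i j ≫ eqToHom (if_pos h.2).symm else 0
  shape i j hij := by simp [K.shape i j hij]
  d_comp_d' i j k _ _ := by
    by_cases hi : i ≤ n <;> by_cases hj : j ≤ n <;> by_cases hk : k ≤ n <;> simp [hi, hj, hk]

lemma isZero_brutalTruncLE_X {i : ℤ} (hi : n < i) : IsZero ((K.brutalTruncLE n).X i) := by
  simp only [brutalTruncLE, if_neg (show ¬ i ≤ n by omega)]
  exact isZero_zero A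

variable {K n}

lemma brutalTruncLE_X_eq {i : ℤ} (hi : i ≤ n) : (K.brutalTruncLE n).X i = K.X i := if_pos hi

lemma brutalTruncLE_d_eq {i j : ℤ} (hi : i ≤ n) (hj : j ≤ n) :
    (K.brutalTruncLE n).d i j =
      eqToHom (brutalTruncLE_X_eq hi) ≫ K.d i j ≫ eqToHom (brutalTruncLE_X_eq hj).symm :=
  dif_pos ⟨hi, hj⟩

lemma brutalTruncLE_d_eq_zero {i j : ℤ} (h : ¬ (i ≤ n ∧ j ≤ n)) : (K.brutalTruncLE n).d i j = 0 :=
  dif_neg h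

variable (K n)

noncomputable def toBrutalTruncLE : K ⟶ K.brutalTruncLE n where
  f i := if h : i ≤ n then eqToHom (brutalTruncLE_X_eq h).symm else 0
  comm' i j hij := by
    by_cases hj : j ≤ n
    · have hi : i ≤ n := by simp only [ComplexShape.up_Rel] at hij; omega
      rw [dif_pos hi, dif_pos hj, brutalTruncLE_d_eq hi hj]
      simp
    · rw [brutalTruncLE_d_eq_zero (fun h => hj h.2), dif_neg hj, comp_zero, comp_zero]

variable {K n} {L : CochainComplex A ℤ}

noncomputable def brutalTruncLEDesc (u : K ⟶ L) (hu : ∀ i, n < i → u.f i = 0) :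
    K.brutalTruncLE n ⟶ L where
  f i := if h : i ≤ n then eqToHom (brutalTruncLE_X_eq h) ≫ u.f i else 0
  comm' i j hij := by
    by_cases hi : i ≤ n
    · by_cases hj : j ≤ n
      · rw [dif_pos hi, dif_pos hj, brutalTruncLE_d_eq hi hj]
        simp
      · rw [dif_pos hi, brutalTruncLE_d_eq_zero (fun h => hj h.2), zero_comp, Category.assoc,
          u.comm, hu j (by omega), comp_zero, comp_zero]
    · rw [dif_neg hi, brutalTruncLE_d_eq_zero (fun h => hi h.1), zero_comp, zero_comp]

lemma toBrutalTruncLE_brutalTruncLEDesc (u : K ⟶ L) (hu : ∀ i, n < i → u.f i = 0) :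
    K.toBrutalTruncLE n ≫ brutalTruncLEDesc u hu = u := by
  ext i
  simp only [HomologicalComplex.comp_f, toBrutalTruncLE, brutalTruncLEDesc]
  by_cases hi : i ≤ n
  · rw [dif_pos hi, dif_pos hi]
    simp
  · rw [dif_neg hi, dif_neg hi, zero_comp, hu i (by omega)]

end BrutalTrunc

end CochainComplex

open CochainComplex

local notation "𝐐" => HomotopyCategory.quotient A (ComplexShape.up ℤ)

theorem InTgeA.quotient_map_eq_zero_of_isZero {V : HomotopyCategory A (ComplexShape.up ℤ)}
    (hV : InTgeA V) {U : CochainComplex A ℤ} (hU : ∀ i, -1 < i → IsZero (U.X i))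
    (u : U ⟶ V.as) : 𝐐.map u = 0 := by
  have hU' : InTleA (𝐐.obj (U⟦(-1 : ℤ)⟧)) :=
    ⟨⟨0, fun i hi => hU (i + -1) (by omega)⟩, fun i hi => hU (i + -1) (by omega)⟩
  let e : (𝐐.obj (U⟦(-1 : ℤ)⟧))⟦(1 : ℤ)⟧ ≅ 𝐐.obj U :=
    ((𝐐.commShiftIso (1 : ℤ)).app _).symm ≪≫
      𝐐.mapIso ((shiftFunctorCompIsoId _ (-1 : ℤ) 1 (by norm_num)).app U)
  exact (cancel_epi e.hom).1 ((hV.2 _ hU' (e.hom ≫ 𝐐.map u)).trans comp_zero.symm)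

/-- `u` factors through the brutal truncation `σ≤-1 K`, which lies in `T≤0_A⟦1⟧`. -/
theorem InTgeA.quotient_map_eq_zero {V : HomotopyCategory A (ComplexShape.up ℤ)}
    (hV : InTgeA V) {K : CochainComplex A ℤ} (u : K ⟶ V.as) (hu : ∀ i, -1 < i → u.f i = 0) :
    𝐐.map u = 0 := by
  rw [← toBrutalTruncLE_brutalTruncLEDesc u hu, Functor.map_comp,
    hV.quotient_map_eq_zero_of_isZero (fun i hi => isZero_brutalTruncLE_X _ _ hi), comp_zero]

lemma exists_comp_d_eq_of_quotient_map_mkHomFromSingle_eq_zero {K : CochainComplex A ℤ} {M : A}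
    {m n : ℤ} (hmn : m + 1 = n) (φ : M ⟶ K.X n)
    (hφ : ∀ k, (ComplexShape.up ℤ).Rel n k → φ ≫ K.d n k = 0)
    (h : 𝐐.map (HomologicalComplex.mkHomFromSingle φ hφ) = 0) :
    ∃ s : M ⟶ K.X m, s ≫ K.d m n = φ := by
  obtain ⟨H⟩ := (HomotopyCategory.quotient_map_eq_zero_iff _).1 h
  have hH := H.comm n
  rw [HomologicalComplex.mkHomFromSingle_f, prevD_eq _ hmn,
    dNext_eq _ (show (ComplexShape.up ℤ).Rel n (n + 1) from rfl),
    HomologicalComplex.single_obj_d, zero_comp, zero_add, HomologicalComplex.zero_f,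
    add_zero] at hH
  exact ⟨(HomologicalComplex.singleObjXSelf _ n M).inv ≫ H.hom n m, by
    rw [Category.assoc, ← hH, Iso.inv_hom_id_assoc]⟩

/-- The null-homotopy is `s₀` in degree `0` and the lift of `u⁻¹ - d s₀` through the kernel
`W⁻² ⟶ W⁻¹` in degree `-1`. -/
lemma quotient_map_eq_zero_of_comp_d_eq {U W : CochainComplex A ℤ}
    (hW : ∀ i, (i < -2 ∨ 0 < i) → IsZero (W.X i))
    (hker : IsLimit (KernelFork.ofι (W.d (-2) (-1)) (W.d_comp_d (-2) (-1) 0)))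
    (u : U ⟶ W) (s₀ : U.X 0 ⟶ W.X (-1)) (hs₀ : s₀ ≫ W.d (-1) 0 = u.f 0) : 𝐐.map u = 0 := by
  obtain ⟨s₁, hs₁⟩ : ∃ s₁ : U.X (-1) ⟶ W.X (-2), s₁ ≫ W.d (-2) (-1) = u.f (-1) - U.d (-1) 0 ≫ s₀ :=
    ⟨_, (KernelFork.IsLimit.lift' hker _
      (by rw [Preadditive.sub_comp, Category.assoc, hs₀, u.comm, sub_self])).2⟩
  let h : ∀ i j, (ComplexShape.up ℤ).Rel j i → (U.X i ⟶ W.X j) := fun i j _ =>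
    match i, j with
    | .ofNat 0, .negSucc 0 => s₀
    | .negSucc 0, .negSucc 1 => s₁
    | _, _ => 0
  have hu : u = Homotopy.nullHomotopicMap' h := by
    ext i
    rcases i with (_ | i) | (_ | _ | i)
    · change u.f 0 = (Homotopy.nullHomotopicMap' h).f 0
      rw [Homotopy.nullHomotopicMap'_f (show (ComplexShape.up ℤ).Rel (-1) 0 from rfl)
        (show (ComplexShape.up ℤ).Rel 0 1 from rfl)]
      change _ = U.d 0 1 ≫ 0 + s₀ ≫ W.d (-1) 0
      rw [hs₀, comp_zero, zero_add]
    · exact (hW _ (Or.inr (by rw [Int.ofNat_eq_natCast]; omega))).eq_of_tgt _ _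
    · change u.f (-1) = (Homotopy.nullHomotopicMap' h).f (-1)
      rw [Homotopy.nullHomotopicMap'_f (show (ComplexShape.up ℤ).Rel (-2) (-1) from rfl)
        (show (ComplexShape.up ℤ).Rel (-1) 0 from rfl)]
      change _ = U.d (-1) 0 ≫ s₀ + s₁ ≫ W.d (-2) (-1)
      rw [hs₁, add_sub_cancel]
    · change u.f (-2) = (Homotopy.nullHomotopicMap' h).f (-2)
      rw [Homotopy.nullHomotopicMap'_f (show (ComplexShape.up ℤ).Rel (-3) (-2) from rfl)
        (show (ComplexShape.up ℤ).Rel (-2) (-1) from rfl)]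
      change _ = U.d (-2) (-1) ≫ s₁ + 0 ≫ W.d (-3) (-2)
      rw [zero_comp, add_zero]
      refine Fork.IsLimit.hom_ext hker ?_
      simp only [Fork.ι_ofι]
      rw [Category.assoc, hs₁, Preadditive.comp_sub, U.d_comp_d_assoc, zero_comp, sub_zero,
        u.comm]
    · exact (hW _ (Or.inl (by omega))).eq_of_tgt _ _
  rw [hu]
  exact (HomotopyCategory.quotient_map_eq_zero_iff _).2 ⟨Homotopy.nullHomotopy' h⟩

namespace CochainComplex

variable (K : CochainComplex A ℤ) {C : A} (p : C ⟶ K.X 0)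

noncomputable def coverComplex : CochainComplex A ℤ :=
  threeTerm (kernel.ι (biprod.desc p (K.d (-1) 0))) (biprod.desc p (K.d (-1) 0))
    (kernel.condition _)

lemma isCCover_coverComplex_d {𝒞 : Set A} (hp : IsCCover 𝒞 p) :
    IsCCover 𝒞 ((biprod.inl : C ⟶ C ⊞ K.X (-1)) ≫
      (Iso.refl ((K.coverComplex p).X (-1))).inv ≫ (K.coverComplex p).d (-1) 0) := by
  change IsCCover 𝒞 (biprod.inl ≫ 𝟙 (C ⊞ K.X (-1)) ≫ biprod.desc p (K.d (-1) 0))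
  rwa [Category.id_comp, biprod.inl_desc]

noncomputable def toCoverComplex : K ⟶ K.coverComplex p :=
  threeTermLift (kernel.lift _ (K.d (-2) (-1) ≫ biprod.inr) (by simp)) biprod.inr (𝟙 _)
    (by rw [← cancel_mono (kernel.ι _)]; simp) (by simp) (by simp)

noncomputable def coverComplexIsLimit :
    IsLimit (KernelFork.ofι ((K.coverComplex p).d (-2) (-1))
      ((K.coverComplex p).d_comp_d (-2) (-1) 0)) :=
  kernelIsKernel (biprod.desc p (K.d (-1) 0))

variable {K p} {s₀ : C ⟶ K.X (-1)} (hs₀ : s₀ ≫ K.d (-1) 0 = p)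
  {s₁ : kernel (K.d (-1) 0) ⟶ K.X (-2)} (hs₁ : s₁ ≫ K.d (-2) (-1) = kernel.ι _)
  (hK : ∀ i, 0 < i → IsZero (K.X i))

lemma biprod_desc_comp_d (hs₀ : s₀ ≫ K.d (-1) 0 = p) :
    biprod.desc s₀ (𝟙 _) ≫ K.d (-1) 0 = biprod.desc p (K.d (-1) 0) := by
  ext <;> simp [hs₀]

noncomputable def fromCoverComplex : K.coverComplex p ⟶ K :=
  threeTermDesc
    (kernel.lift _ (kernel.ι _ ≫ biprod.desc s₀ (𝟙 _))
      (by rw [Category.assoc, biprod_desc_comp_d hs₀, kernel.condition]) ≫ s₁)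
    (biprod.desc s₀ (𝟙 _)) (𝟙 _) (by simp [hs₁]) (by simp [biprod_desc_comp_d hs₀])
    ((hK 1 one_pos).eq_of_tgt _ _)

lemma quotient_map_fromCoverComplex_comp_toCoverComplex :
    𝐐.map (fromCoverComplex hs₀ hs₁ hK ≫ K.toCoverComplex p) = 𝟙 _ := by
  rw [← sub_eq_zero, ← 𝐐.map_id, ← 𝐐.map_sub]
  exact quotient_map_eq_zero_of_comp_d_eq (fun i hi => isZero_threeTerm_X _ _ _ hi)
    (coverComplexIsLimit K p) _ 0 (by
      change (0 : K.X 0 ⟶ C ⊞ K.X (-1)) ≫ biprod.desc p (K.d (-1) 0) =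
        𝟙 (K.X 0) ≫ 𝟙 (K.X 0) - 𝟙 (K.X 0)
      simp)

lemma quotient_map_toCoverComplex_comp_fromCoverComplex (hKge : InTgeA (𝐐.obj K)) :
    𝐐.map (K.toCoverComplex p ≫ fromCoverComplex hs₀ hs₁ hK) = 𝟙 _ := by
  rw [← sub_eq_zero, ← 𝐐.map_id, ← 𝐐.map_sub]
  refine hKge.quotient_map_eq_zero _ fun i hi => ?_
  obtain rfl | hi := show i = 0 ∨ 0 < i by omega
  · change 𝟙 (K.X 0) ≫ 𝟙 (K.X 0) - 𝟙 (K.X 0) = 0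
    simp
  · exact (hK i hi).eq_of_tgt _ _

noncomputable def coverComplexIso (hKge : InTgeA (𝐐.obj K)) :
    𝐐.obj (K.coverComplex p) ≅ 𝐐.obj K where
  hom := 𝐐.map (fromCoverComplex hs₀ hs₁ hK)
  inv := 𝐐.map (K.toCoverComplex p)
  hom_inv_id := by
    rw [← 𝐐.map_comp, quotient_map_fromCoverComplex_comp_toCoverComplex]
  inv_hom_id := by
    rw [← 𝐐.map_comp, quotient_map_toCoverComplex_comp_fromCoverComplex hs₀ hs₁ hK hKge]

end CochainComplex

lemma inTC_PObj {𝒞 : Set A} (h𝒞 : IsAddKaroubi 𝒞) {M : A} (hM : M ∈ 𝒞) : InTC 𝒞 (PObj M) := by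
  refine ⟨⟨0, fun i hi => HomologicalComplex.isZero_single_obj_X _ 0 M i (by omega)⟩, fun i => ?_⟩
  by_cases hi : i = 0
  · subst hi
    exact h𝒞.iso (HomologicalComplex.singleObjXSelf _ 0 M).symm hM
  · exact h𝒞.zero _ (HomologicalComplex.isZero_single_obj_X _ 0 M i hi)

section CApprox

variable {𝒞 : Set A} {Vc V : HomotopyCategory A (ComplexShape.up ℤ)} {f : Vc ⟶ V}

lemma IsCApprox.eq_zero_of_isZero (hf : IsCApprox 𝒞 f) (hVc : IsZero Vc)
    {X : HomotopyCategory A (ComplexShape.up ℤ)} (hX : InTC 𝒞 X) (θ : X ⟶ V) : θ = 0 := by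
  obtain ⟨g, rfl⟩ := (hf.2.2 X hX).2 θ
  change g ≫ f = 0
  rw [hVc.eq_of_tgt g 0, zero_comp]

lemma IsCApprox.isZero_of_eq_zero (hf : IsCApprox 𝒞 f) (h : f = 0) : IsZero Vc :=
  (IsZero.iff_id_eq_zero Vc).2 ((hf.2.2 Vc hf.1).1 (show 𝟙 Vc ≫ f = 0 ≫ f by simp [h]))

end CApprox

lemma f_zero_eq_of_quotient_map_eq {M Z : A}
    {φ ψ : (HomologicalComplex.single A (ComplexShape.up ℤ) 0).obj M ⟶
      (HomologicalComplex.single A (ComplexShape.up ℤ) 0).obj Z} (h : 𝐐.map φ = 𝐐.map ψ) :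
    φ.f 0 = ψ.f 0 := by
  have H := (HomotopyCategory.homotopyOfEq _ _ h).comm 0
  rwa [dNext_eq _ (show (ComplexShape.up ℤ).Rel 0 1 from rfl),
    prevD_eq _ (show (ComplexShape.up ℤ).Rel (-1) 0 from rfl), HomologicalComplex.single_obj_d,
    HomologicalComplex.single_obj_d, zero_comp, comp_zero, zero_add, zero_add] at H

lemma epi_f_zero_of_isIso_homologyMap {K : CochainComplex A ℤ} {Z : A}
    (u : K ⟶ (HomologicalComplex.single A (ComplexShape.up ℤ) 0).obj Z)
    [IsIso (HomologicalComplex.homologyMap u 0)] : Epi (u.f 0) := by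
  let S := (HomologicalComplex.single A (ComplexShape.up ℤ) 0).obj Z
  have : IsIso (S.homologyπ 0) := S.isIso_homologyπ (-1) 0 (by simp) (by simp [S])
  have : IsIso (S.iCycles 0) := S.isIso_iCycles 0 1 (by simp) (by simp [S])
  have : Epi (HomologicalComplex.cyclesMap u 0) := by
    rw [← epi_comp_iff_of_isIso _ (S.homologyπ 0), ← HomologicalComplex.homologyπ_naturality]
    infer_instance
  have : Epi (K.iCycles 0 ≫ u.f 0) := by
    rw [← HomologicalComplex.cyclesMap_i]
    infer_instance
  exact epi_of_epi (K.iCycles 0) _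

/-- The degree-`0` component of a `C`-approximation of `Z` (placed in degree `0`) is a
`C`-cover of `Z`. -/
lemma exists_isCCover {𝒞 : Set A} (h𝒞 : IsAddKaroubi 𝒞) (happrox : CApproximating 𝒞) (Z : A) :
    ∃ (C : A) (p : C ⟶ Z), IsCCover 𝒞 p := by
  obtain ⟨Xc, f, hXc, hf, hbij⟩ := happrox (PObj Z)
    ⟨0, fun i hi => HomologicalComplex.isZero_single_obj_X _ 0 Z i (by omega)⟩
  obtain ⟨u, rfl⟩ := 𝐐.map_surjective f
  have : IsIso (HomologicalComplex.homologyMap u 0) :=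
    (NatIso.isIso_map_iff (HomotopyCategory.homologyFunctorFactors A (ComplexShape.up ℤ) 0) u).1
      (hf 0)
  have := epi_f_zero_of_isIso_homologyMap u
  refine ⟨Xc.as.X 0, u.f 0 ≫ (HomologicalComplex.singleObjXSelf _ 0 Z).hom, hXc.2 0,
    epi_comp _ _, fun M hM g => ?_⟩
  obtain ⟨χ, hχ⟩ := (hbij _ (inTC_PObj h𝒞 hM)).2 (PMap g)
  obtain ⟨w, rfl⟩ := 𝐐.map_surjective χ
  have hw := f_zero_eq_of_quotient_map_eq (φ := w ≫ u)
    (ψ := (HomologicalComplex.single A (ComplexShape.up ℤ) 0).map g)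
    (by rw [𝐐.map_comp]; exact hχ)
  rw [HomologicalComplex.comp_f, HomologicalComplex.single_map_f_self] at hw
  exact ⟨(HomologicalComplex.singleObjXSelf _ 0 M).inv ≫ w.f 0, by simp [reassoc_of% hw]⟩

lemma IsCApprox.exists_comp_d_eq_of_isZero {𝒞 : Set A} (h𝒞 : IsAddKaroubi 𝒞)
    {Vc V : HomotopyCategory A (ComplexShape.up ℤ)} {f : Vc ⟶ V} (hf : IsCApprox 𝒞 f)
    (hVc : IsZero Vc) (hV : IsZero (V.as.X 1)) {C : A} (hC : C ∈ 𝒞) (p : C ⟶ V.as.X 0) :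
    ∃ s₀ : C ⟶ V.as.X (-1), s₀ ≫ V.as.d (-1) 0 = p :=
  exists_comp_d_eq_of_quotient_map_mkHomFromSingle_eq_zero (n := 0) rfl p
    (fun k hk => by
      obtain rfl : k = 1 := by simp only [ComplexShape.up_Rel] at hk; omega
      exact hV.eq_of_tgt _ _)
    (hf.eq_zero_of_isZero hVc (inTC_PObj h𝒞 hC) _)

lemma InTgeA.exists_comp_d_eq_kernel_ι {V : HomotopyCategory A (ComplexShape.up ℤ)}
    (hV : InTgeA V) : ∃ s₁ : kernel (V.as.d (-1) 0) ⟶ V.as.X (-2),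
      s₁ ≫ V.as.d (-2) (-1) = kernel.ι (V.as.d (-1) 0) :=
  exists_comp_d_eq_of_quotient_map_mkHomFromSingle_eq_zero (n := -1) rfl _
    (fun k hk => by
      obtain rfl : k = 0 := by simp only [ComplexShape.up_Rel] at hk; omega
      exact kernel.condition _)
    (hV.quotient_map_eq_zero _ fun i hi =>
      (HomologicalComplex.isZero_single_obj_X _ _ _ i (by omega)).eq_of_src _ _)

theorem statement6 {A : Type u} [Category.{v} A] [Abelian A]
    (𝒞 : Set A) (h𝒞 : IsAddKaroubi 𝒞) (happrox : CApproximating 𝒞) :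
    ∀ V, InHA V → ∀ (Vc : HomotopyCategory A (ComplexShape.up ℤ)) (f : Vc ⟶ V),
      IsCApprox 𝒞 f →
      (IsZero Vc ↔
        ∃ W : CochainComplex A ℤ,
          -- `W` is concentrated in degrees `-2, -1, 0`:
          (∀ i : ℤ, (i < -2 ∨ 0 < i) → IsZero (W.X i)) ∧
          -- the middle term decomposes as `C ⊞ Y` with `C ∈ 𝒞` and the component
          -- `C ⟶ W.X 0` of the differential a `C`-cover:
          (∃ (C Y : A) (_ : C ∈ 𝒞) (e : W.X (-1) ≅ C ⊞ Y),
            IsCCover 𝒞 (biprod.inl ≫ e.inv ≫ W.d (-1) 0)) ∧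
          -- `W.X (-2)` is the kernel of the differential `W.X (-1) ⟶ W.X 0`:
          Nonempty (IsLimit (KernelFork.ofι (W.d (-2) (-1)) (W.d_comp_d (-2) (-1) 0))) ∧
          -- and `V ≅ W` in `H_A`:
          Nonempty ((HomotopyCategory.quotient A (ComplexShape.up ℤ)).obj W ≅ V)) := by
  intro V hV Vc f hf
  constructor
  · intro hVc
    have hK : ∀ i, 0 < i → IsZero (V.as.X i) := hV.1.2
    obtain ⟨C, p, hp⟩ := exists_isCCover h𝒞 happrox (V.as.X 0)
    obtain ⟨s₀, hs₀⟩ := hf.exists_comp_d_eq_of_isZero h𝒞 hVc (hK 1 one_pos) hp.1 p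
    obtain ⟨s₁, hs₁⟩ := hV.2.exists_comp_d_eq_kernel_ι
    exact ⟨coverComplex V.as p, fun i hi => isZero_threeTerm_X _ _ _ hi,
      ⟨C, V.as.X (-1), hp.1, Iso.refl _, isCCover_coverComplex_d _ _ hp⟩,
      ⟨coverComplexIsLimit _ _⟩, ⟨coverComplexIso hs₀ hs₁ hK hV.2⟩⟩
  · rintro ⟨W, hW, ⟨C, Y, _, e, hp⟩, ⟨hker⟩, ⟨ψ⟩⟩
    obtain ⟨u, hu⟩ := (HomotopyCategory.quotient A (ComplexShape.up ℤ)).map_surjective (f ≫ ψ.inv)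
    obtain ⟨g, hg⟩ := hp.2.2 _ (hf.1.2 0) (u.f 0)
    have hfψ : f ≫ ψ.inv = 0 := hu ▸
      quotient_map_eq_zero_of_comp_d_eq hW hker u (g ≫ biprod.inl ≫ e.inv) (by simpa using hg)
    exact hf.isZero_of_eq_zero ((cancel_mono ψ.inv).1 (hfψ.trans zero_comp.symm))
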